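/- arXiv:1705.10427 — 2 statements merged into one kernel-verified Lean document; each statement's English description precedes it below -/
import Mathlib

section
/- Let Σ be a finite alphabet, Σ_uc ⊆ Σ, M ⊆ Σ^* a language, and L ⊆ M a prefix-closed language. Then the language R = L − ((M − L)/Σ_uc^*)·Σ^* is controllable with respect to M and Σ_uc; in particular R·Σ_uc ∩ M ⊆ R. -/
/-- Natural projection: delete every letter not in `A`. -/
noncomputable def natProj {α : Type*} (A : Set α) (w : List α) : List α :=
  w.filter (fun a => @decide (a ∈ A) (Classical.propDecidable _))

/-- Words all of whose letters lie in `A` (i.e. `A^*`). -/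
def wordsOver {α : Type*} (A : Set α) : Set (List α) := {w | ∀ a ∈ w, a ∈ A}

/-- Inverse projection of a language `K` over the subalphabet `A`. -/
def invProj {α : Type*} (A : Set α) (K : Set (List α)) : Set (List α) :=
  {t | natProj A t ∈ K}

/-- A language is prefix-closed if every prefix of every word in it belongs to it. -/
def PrefixClosed {α : Type*} (L : Set (List α)) : Prop :=
  ∀ u v : List α, u <+: v → v ∈ L → u ∈ L

/-- Concatenation of two languages: `A·B = {st : s ∈ A, t ∈ B}`. -/
def catL {α : Type*} (A B : Set (List α)) : Set (List α) :=
  {w | ∃ s ∈ A, ∃ t ∈ B, w = s ++ t}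

/-- One-letter extension: `K·E = {sσ : s ∈ K, σ ∈ E}`. -/
def extL {α : Type*} (K : Set (List α)) (E : Set α) : Set (List α) :=
  {w | ∃ s ∈ K, ∃ σ ∈ E, w = s ++ [σ]}

/-- Quotient of languages: `L₁/L₂ = {s : ∃ t ∈ L₂, st ∈ L₁}`. -/
def quotL {α : Type*} (L₁ L₂ : Set (List α)) : Set (List α) :=
  {s | ∃ t ∈ L₂, s ++ t ∈ L₁}

/-- Prefix closure of a language. -/
def preL {α : Type*} (K : Set (List α)) : Set (List α) :=
  {u | ∃ w ∈ K, u <+: w}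

/-- `K` is controllable w.r.t. the plant language `M` and uncontrollable events `Suc`:
`pre(K)·Σ_uc ∩ M ⊆ pre(K)`. -/
def Controllable {α : Type*} (M : Set (List α)) (Suc : Set α) (K : Set (List α)) : Prop :=
  extL (preL K) Suc ∩ M ⊆ preL K

/-- The supremal controllable sublanguage of `L` w.r.t. `M` and `Suc`:
the union of all controllable sublanguages of `L`. -/
def supC {α : Type*} (M : Set (List α)) (Suc : Set α) (L : Set (List α)) : Set (List α) :=
  ⋃₀ {K | K ⊆ L ∧ Controllable M Suc K}


/-! A word leaves `R` exactly when one of its prefixes can be pushed from `L` out into `M` by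
uncontrollable events. That set of bad prefixes is closed under erasing a trailing uncontrollable
letter, so an uncontrollable extension inside `M` of a word of `R` stays in `R`. Since `L` is
prefix-closed, so is `R`, and controllability reduces to that one-step closure. -/

section Language

variable {α : Type*}

theorem mem_catL_univ_iff {Q : Set (List α)} {w : List α} :
    w ∈ catL Q Set.univ ↔ ∃ u ∈ Q, u <+: w := by
  constructor
  · rintro ⟨u, hu, t, -, rfl⟩
    exact ⟨u, hu, List.prefix_append u t⟩
  · rintro ⟨u, hu, t, rfl⟩
    exact ⟨u, hu, t, trivial, rfl⟩

theorem PrefixClosed.preL_eq {K : Set (List α)} (hK : PrefixClosed K) : preL K = K :=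
  Set.Subset.antisymm (fun _ ⟨w, hw, hu⟩ => hK _ w hu hw)
    (fun u hu => ⟨u, hu, List.prefix_refl u⟩)

theorem PrefixClosed.diff_catL_univ {L : Set (List α)} (hL : PrefixClosed L)
    (Q : Set (List α)) : PrefixClosed (L \ catL Q Set.univ) := by
  rintro u v huv ⟨hvL, hvQ⟩
  refine ⟨hL u v huv hvL, fun huQ => hvQ ?_⟩
  obtain ⟨a, ha, hau⟩ := mem_catL_univ_iff.mp huQ
  exact mem_catL_univ_iff.mpr ⟨a, ha, hau.trans huv⟩

theorem controllable_of_prefixClosed {M K : Set (List α)} {A : Set α} (hK : PrefixClosed K)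
    (h : extL K A ∩ M ⊆ K) : Controllable M A K := by
  rw [Controllable, hK.preL_eq]
  exact h

theorem subset_quotL_wordsOver (K : Set (List α)) (A : Set α) : K ⊆ quotL K (wordsOver A) :=
  fun s hs => ⟨[], fun _ h => absurd h List.not_mem_nil, by simpa using hs⟩

theorem mem_quotL_wordsOver_of_append {K : Set (List α)} {A : Set α} {s : List α} {σ : α}
    (h : s ++ [σ] ∈ quotL K (wordsOver A)) (hσ : σ ∈ A) : s ∈ quotL K (wordsOver A) := by
  obtain ⟨t, ht, hst⟩ := h
  refine ⟨σ :: t, ?_, by simpa using hst⟩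
  rintro a (_ | ⟨_, ha⟩)
  exacts [hσ, ht a ha]

theorem mem_catL_quotL_univ_of_append {K : Set (List α)} {A : Set α} {s : List α} {σ : α}
    (h : s ++ [σ] ∈ catL (quotL K (wordsOver A)) Set.univ) (hσ : σ ∈ A) :
    s ∈ catL (quotL K (wordsOver A)) Set.univ := by
  obtain ⟨u, hu, hus⟩ := mem_catL_univ_iff.mp h
  rcases List.prefix_concat_iff.mp hus with rfl | hus
  · exact ⟨s, mem_quotL_wordsOver_of_append hu hσ, [], trivial, (List.append_nil s).symm⟩
  · exact mem_catL_univ_iff.mpr ⟨u, hu, hus⟩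

theorem extL_inter_subset_diff_catL_quotL (M L : Set (List α)) (A : Set α) :
    extL (L \ catL (quotL (M \ L) (wordsOver A)) Set.univ) A ∩ M ⊆
      L \ catL (quotL (M \ L) (wordsOver A)) Set.univ := by
  rintro _ ⟨⟨s, ⟨hsL, hsQ⟩, σ, hσ, rfl⟩, hM⟩
  refine ⟨?_, fun h => hsQ (mem_catL_quotL_univ_of_append h hσ)⟩
  by_contra hL
  have hQ : s ++ [σ] ∈ quotL (M \ L) (wordsOver A) := subset_quotL_wordsOver _ _ ⟨hM, hL⟩
  exact hsQ ⟨s, mem_quotL_wordsOver_of_append hQ hσ, [], trivial, (List.append_nil s).symm⟩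

end Language

theorem stmt_8_general {α : Type*} (Suc : Set α) (M L : Set (List α))
    (hL : PrefixClosed L)
    (R : Set (List α))
    (hR : R = L \ catL (quotL (M \ L) (wordsOver Suc)) Set.univ) :
    Controllable M Suc R ∧ extL R Suc ∩ M ⊆ R := by
  subst hR
  have hclosed := extL_inter_subset_diff_catL_quotL M L Suc
  exact ⟨controllable_of_prefixClosed (hL.diff_catL_univ _) hclosed, hclosed⟩

/-- The explicitly computed language `R = L − ((M − L)/Σ_uc^*)·Σ^*` is controllable
w.r.t. `M` and `Σ_uc`; in particular `R·Σ_uc ∩ M ⊆ R`. -/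
theorem stmt_8 {α : Type*} [Fintype α] (Suc : Set α) (M L : Set (List α))
    (hLM : L ⊆ M) (hL : PrefixClosed L)
    (R : Set (List α))
    (hR : R = L \ catL (quotL (M \ L) (wordsOver Suc)) Set.univ) :
    Controllable M Suc R ∧ extL R Suc ∩ M ⊆ R :=
  stmt_8_general Suc M L hL R hR
end

section
/- Let Σ be a finite alphabet, Σ_uc ⊆ Σ, M ⊆ Σ^* a prefix-closed language, and L ⊆ M a prefix-closed language. If K ⊆ L is any language that is controllable with respect to M and Σ_uc (i.e., K̄·Σ_uc ∩ M ⊆ K̄, where K̄ is the prefix-closure of K), then K ⊆ L − ((M − L)/Σ_uc^*)·Σ^*. -/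
theorem Controllable.append_mem_preL {α : Type*} {M : Set (List α)} {Suc : Set α}
    {K : Set (List α)} (hM : PrefixClosed M) (hK : Controllable M Suc K) :
    ∀ {s u : List α}, s ∈ preL K → u ∈ wordsOver Suc → s ++ u ∈ M → s ++ u ∈ preL K
  | s, [], hs, _, _ => by simpa using hs
  | s, σ :: u, hs, hu, hsu => by
    have hσ : σ ∈ Suc := hu σ List.mem_cons_self
    have hsσM : s ++ [σ] ∈ M := hM _ _ ⟨u, by simp⟩ hsu
    have hsσ : s ++ [σ] ∈ preL K := hK ⟨⟨s, hs, σ, hσ, rfl⟩, hsσM⟩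
    simpa using append_mem_preL hM hK hsσ (fun a ha => hu a (List.mem_cons_of_mem σ ha))
      (by simpa using hsu)

theorem preL_subset_of_prefixClosed {α : Type*} {K L : Set (List α)} (hL : PrefixClosed L)
    (hKL : K ⊆ L) : preL K ⊆ L :=
  fun _ ⟨w, hw, huw⟩ => hL _ w huw (hKL hw)

theorem stmt_9_general {α : Type*} (Suc : Set α) (M L : Set (List α))
    (hM : PrefixClosed M) (hL : PrefixClosed L)
    (K : Set (List α)) (hKL : K ⊆ L) (hK : Controllable M Suc K) :
    K ⊆ L \ catL (quotL (M \ L) (wordsOver Suc)) Set.univ := by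
  rintro w hw
  refine ⟨hKL hw, ?_⟩
  rintro ⟨s, ⟨u, hu, hsuM, hsuL⟩, t, -, rfl⟩
  have hs : s ∈ preL K := ⟨s ++ t, hw, List.prefix_append s t⟩
  exact hsuL (preL_subset_of_prefixClosed hL hKL (hK.append_mem_preL hM hs hu hsuM))

/-- Supremality in Lemma 1: every controllable sublanguage of `L` is contained in
`L − ((M − L)/Σ_uc^*)·Σ^*`. -/
theorem stmt_9 {α : Type*} [Fintype α] (Suc : Set α) (M L : Set (List α))
    (hM : PrefixClosed M) (hLM : L ⊆ M) (hL : PrefixClosed L)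
    (K : Set (List α)) (hKL : K ⊆ L) (hK : Controllable M Suc K) :
    K ⊆ L \ catL (quotL (M \ L) (wordsOver Suc)) Set.univ :=
  stmt_9_general Suc M L hM hL K hKL hK
end
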